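/- arXiv:math/0505492 — 5 statements merged into one kernel-verified Lean document; each statement's English description precedes it below -/
import Mathlib

section
/- Suppose the probability measure μ satisfies a weak Poincaré inequality with nonincreasing β. Let F : ℝ^d → ℝ be L-Lipschitz with median m. Then for every integer k ≥ 1 and every s ∈ (0,1/4): μ(F − m > k) ≤ s/(1 + L²β(s)) + μ(F − m > k−1)·(1 − 1/(2(1 + L²β(s)))). -/
open MeasureTheory Set

noncomputable section

/-- Oscillation of a function: `sup f - inf f`. -/
def osc {α : Type*} (f : α → ℝ) : ℝ := sSup (Set.range f) - sInf (Set.range f)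

/-!
The cutoff `f = min 1 (max (F - m - (k - 1)) 0)` lies between the indicators of
`B = {F - m > k}` and `A = {F - m > k - 1}`, so its gradient is supported in `A \ B`, where
it is bounded by `L`. Since `μ A ≤ 1/2` by the median property, `(∫ f)² ≤ μ A / 2`, and the
weak Poincaré inequality for `f` becomes `μ B - μ A / 2 ≤ L² β(s) (μ A - μ B) + s`, which is
the claim solved for `μ B`.
-/

section Osc

variable {α : Type*} {f : α → ℝ}

lemma osc_nonneg (hf₁ : BddAbove (range f)) (hf₂ : BddBelow (range f)) : 0 ≤ osc f :=
  sub_nonneg.2 (Real.sInf_le_sSup _ hf₂ hf₁)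

lemma osc_le [Nonempty α] {a b : ℝ} (hf : ∀ x, f x ∈ Icc a b) : osc f ≤ b - a :=
  sub_le_sub (csSup_le (range_nonempty f) (forall_mem_range.2 fun x => (hf x).2))
    (le_csInf (range_nonempty f) (forall_mem_range.2 fun x => (hf x).1))

end Osc

def unitRamp (t : ℝ) : ℝ := min 1 (max t 0)

lemma lipschitzWith_unitRamp : LipschitzWith 1 unitRamp :=
  (LipschitzWith.id.max_const 0).const_min 1

lemma indicator_one_le_unitRamp_comp {α : Type*} {g : α → ℝ} {B : Set α}
    (hB : ∀ x ∈ B, 1 ≤ g x) : B.indicator 1 ≤ fun x => unitRamp (g x) := by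
  intro x
  by_cases hx : x ∈ B
  · simp [indicator_of_mem hx, unitRamp, hB x hx]
  · simp [indicator_of_notMem hx, unitRamp]

lemma unitRamp_comp_le_indicator_one {α : Type*} {g : α → ℝ} {A : Set α}
    (hA : ∀ x, 0 < g x → x ∈ A) : (fun x => unitRamp (g x)) ≤ A.indicator 1 := by
  intro x
  by_cases hx : x ∈ A
  · simp [indicator_of_mem hx, unitRamp]
  · simp [indicator_of_notMem hx, unitRamp, not_lt.1 (mt (hA x) hx)]

section Sandwich

variable {α : Type*} {f : α → ℝ} {A B : Set α}
  (hfB : B.indicator 1 ≤ f) (hfA : f ≤ A.indicator 1)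
include hfB hfA

lemma mem_Icc_of_indicator_le (x : α) : f x ∈ Icc 0 1 :=
  ⟨(indicator_nonneg (fun _ _ => zero_le_one) x).trans (hfB x),
    (hfA x).trans (indicator_apply_le' (fun _ => le_rfl) fun _ => zero_le_one)⟩

lemma subset_of_indicator_le : B ⊆ A := by
  intro x hxB
  by_contra hxA
  have := (hfB x).trans (hfA x)
  simp only [indicator_of_mem hxB, indicator_of_notMem hxA, Pi.one_apply] at this
  exact one_ne_zero (le_antisymm this zero_le_one)

end Sandwich

section Variance

variable {Ω : Type*} [MeasurableSpace Ω] {μ : Measure Ω} [IsFiniteMeasure μ] {f : Ω → ℝ}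
  {A B : Set Ω}

lemma measureReal_sub_half_le_variance (hf : AEStronglyMeasurable f μ) (hA : MeasurableSet A)
    (hB : MeasurableSet B) (hfB : B.indicator 1 ≤ f) (hfA : f ≤ A.indicator 1)
    (hA_half : μ.real A ≤ 1 / 2) :
    μ.real B - μ.real A / 2 ≤ ∫ x, f x ^ 2 ∂μ - (∫ x, f x ∂μ) ^ 2 := by
  have hf01 := mem_Icc_of_indicator_le hfB hfA
  have hf_norm : ∀ x, ‖f x‖ ≤ 1 := fun x =>
    abs_le.2 ⟨by linarith [(hf01 x).1], (hf01 x).2⟩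
  have hf_int : Integrable f μ := .of_bound hf 1 (ae_of_all _ hf_norm)
  have hmean_le : ∫ x, f x ∂μ ≤ μ.real A := by
    rw [← integral_indicator_one hA]
    exact integral_mono hf_int ((integrable_const 1).indicator hA) hfA
  have hB_le : μ.real B ≤ ∫ x, f x ^ 2 ∂μ := by
    rw [← integral_indicator_one hB]
    refine integral_mono_of_nonneg (ae_of_all _ (indicator_nonneg fun _ _ => zero_le_one))
      (.of_bound (hf.pow 2) 1 (ae_of_all _ fun x => ?_)) (ae_of_all _ fun x => ?_)
    · simpa only [norm_pow] using pow_le_one₀ (norm_nonneg _) (hf_norm x)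
    · calc B.indicator 1 x = B.indicator 1 x ^ 2 := by by_cases hx : x ∈ B <;> simp [hx]
        _ ≤ f x ^ 2 := pow_le_pow_left₀ (indicator_nonneg (fun _ _ => zero_le_one) x) (hfB x) 2
  have hmean_nonneg : 0 ≤ ∫ x, f x ∂μ := integral_nonneg fun x => (hf01 x).1
  nlinarith

end Variance

section Gradient

variable {E : Type*} [NormedAddCommGroup E] [NormedSpace ℝ E] {f : E → ℝ} {L : NNReal}
  {A B : Set E}

/-- On `B` the function attains its maximum `1` and off `A` its minimum `0`, so its derivative
vanishes there (`fderiv` is `0` also where `f` is not differentiable). -/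
lemma sq_norm_fderiv_le_indicator (hf : LipschitzWith L f) (hfB : B.indicator 1 ≤ f)
    (hfA : f ≤ A.indicator 1) (x : E) :
    ‖fderiv ℝ f x‖ ^ 2 ≤ (A \ B).indicator (fun _ => (L : ℝ) ^ 2) x := by
  have hf01 := mem_Icc_of_indicator_le hfB hfA
  have hbound_nonneg : 0 ≤ (A \ B).indicator (fun _ => (L : ℝ) ^ 2) x :=
    indicator_nonneg (fun _ _ => sq_nonneg _) x
  by_cases hxB : x ∈ B
  · have hmax : IsLocalMax f x := Filter.Eventually.of_forall fun y => by
      rw [le_antisymm (hf01 x).2 (by simpa [hxB] using hfB x)]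
      exact (hf01 y).2
    simpa [hmax.fderiv_eq_zero] using hbound_nonneg
  by_cases hxA : x ∈ A
  · rw [indicator_of_mem (show x ∈ A \ B from ⟨hxA, hxB⟩)]
    exact pow_le_pow_left₀ (norm_nonneg _) (norm_fderiv_le_of_lipschitz ℝ hf) 2
  · have hmin : IsLocalMin f x := Filter.Eventually.of_forall fun y => by
      rw [le_antisymm (by simpa [hxA] using hfA x) (hf01 x).1]
      exact (hf01 y).1
    simpa [hmin.fderiv_eq_zero] using hbound_nonneg

lemma integral_sq_norm_fderiv_le [MeasurableSpace E] {μ : Measure E} [IsFiniteMeasure μ]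
    (hf : LipschitzWith L f) (hA : MeasurableSet A) (hB : MeasurableSet B)
    (hfB : B.indicator 1 ≤ f) (hfA : f ≤ A.indicator 1) :
    ∫ x, ‖fderiv ℝ f x‖ ^ 2 ∂μ ≤ (L : ℝ) ^ 2 * (μ.real A - μ.real B) := by
  calc ∫ x, ‖fderiv ℝ f x‖ ^ 2 ∂μ
      ≤ ∫ x, (A \ B).indicator (fun _ => (L : ℝ) ^ 2) x ∂μ :=
        integral_mono_of_nonneg (ae_of_all _ fun _ => by positivity)
          ((integrable_const _).indicator (hA.diff hB))
          (ae_of_all _ (sq_norm_fderiv_le_indicator hf hfB hfA))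
    _ = (L : ℝ) ^ 2 * (μ.real A - μ.real B) := by
        rw [integral_indicator_const _ (hA.diff hB), smul_eq_mul, mul_comm,
          measureReal_sdiff (subset_of_indicator_le hfB hfA) hB]

end Gradient

lemma le_div_add_mul_of_sub_half_le {p q s C : ℝ} (hC : 0 ≤ C)
    (h : p - q / 2 ≤ C * (q - p) + s) :
    p ≤ s / (1 + C) + q * (1 - 1 / (2 * (1 + C))) := by
  have hC' : 0 < 1 + C := by linarith
  have hgap : s / (1 + C) + q * (1 - 1 / (2 * (1 + C))) - p =
      (C * (q - p) + s - (p - q / 2)) / (1 + C) := by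
    field_simp
    ring
  rw [← sub_nonneg, hgap]
  exact div_nonneg (by linarith) hC'.le

theorem deviation_recursion_general {d : ℕ}
    (μ : Measure (EuclideanSpace ℝ (Fin d))) [IsProbabilityMeasure μ]
    (β : ℝ → ℝ) (hβnonneg : ∀ s ∈ Set.Ioo (0:ℝ) (1/4), 0 ≤ β s)
    (hWP : ∀ f : EuclideanSpace ℝ (Fin d) → ℝ, LocallyLipschitz f →
      BddAbove (Set.range f) → BddBelow (Set.range f) →
      ∀ s ∈ Set.Ioo (0:ℝ) (1/4),
        ∫ x, (f x)^2 ∂μ - (∫ x, f x ∂μ)^2 ≤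
          β s * ∫ x, ‖fderiv ℝ f x‖^2 ∂μ + s * (osc f)^2)
    (L : NNReal) (F : EuclideanSpace ℝ (Fin d) → ℝ) (hF : LipschitzWith L F)
    (m : ℝ) (hm₁ : μ {x | m < F x} ≤ 1/2) :
    ∀ k : ℕ, 1 ≤ k → ∀ s ∈ Set.Ioo (0:ℝ) (1/4),
      (μ {x | (k : ℝ) < F x - m}).toReal ≤
        s / (1 + (L:ℝ)^2 * β s)
        + (μ {x | (k : ℝ) - 1 < F x - m}).toReal
          * (1 - 1 / (2 * (1 + (L:ℝ)^2 * β s))) := by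
  intro k hk s hs
  have hk' : (1 : ℝ) ≤ k := by exact_mod_cast hk
  set A := {x | (k : ℝ) - 1 < F x - m}
  set B := {x | (k : ℝ) < F x - m}
  set f := fun x => unitRamp (F x - (m + (k - 1)))
  have hfB : B.indicator 1 ≤ f :=
    indicator_one_le_unitRamp_comp fun x (hx : (k : ℝ) < F x - m) => by linarith
  have hfA : f ≤ A.indicator 1 :=
    unitRamp_comp_le_indicator_one fun x hx => show (k : ℝ) - 1 < F x - m by linarith
  have hf : LipschitzWith L f := by
    simpa [f, Function.comp_def] using
      lipschitzWith_unitRamp.comp (hF.sub (LipschitzWith.const (m + (k - 1))))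
  have hFm := hF.continuous.measurable.sub_const m
  have hA : MeasurableSet A := measurableSet_lt measurable_const hFm
  have hB : MeasurableSet B := measurableSet_lt measurable_const hFm
  have hA_half : μ.real A ≤ 1 / 2 := by
    have : μ A ≤ 1 / 2 := (measure_mono fun x (hx : (k : ℝ) - 1 < F x - m) =>
      show m < F x by linarith).trans hm₁
    simpa [measureReal_def] using ENNReal.toReal_mono (by simp) this
  have hf01 := mem_Icc_of_indicator_le hfB hfA
  have hf_above : BddAbove (range f) := ⟨1, forall_mem_range.2 fun x => (hf01 x).2⟩
  have hf_below : BddBelow (range f) := ⟨0, forall_mem_range.2 fun x => (hf01 x).1⟩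
  have hosc : osc f ^ 2 ≤ 1 :=
    pow_le_one₀ (osc_nonneg hf_above hf_below) (by simpa using osc_le hf01)
  have hβs := hβnonneg s hs
  refine le_div_add_mul_of_sub_half_le (mul_nonneg (sq_nonneg _) hβs) ?_
  calc μ.real B - μ.real A / 2
      ≤ ∫ x, f x ^ 2 ∂μ - (∫ x, f x ∂μ) ^ 2 :=
        measureReal_sub_half_le_variance hf.continuous.aestronglyMeasurable hA hB hfB hfA hA_half
    _ ≤ β s * ∫ x, ‖fderiv ℝ f x‖ ^ 2 ∂μ + s * osc f ^ 2 :=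
        hWP f hf.locallyLipschitz hf_above hf_below s hs
    _ ≤ β s * ((L : ℝ) ^ 2 * (μ.real A - μ.real B)) + s * 1 := by
        gcongr
        · exact integral_sq_norm_fderiv_le hf hA hB hfB hfA
        · exact hs.1.le
    _ = (L : ℝ) ^ 2 * β s * (μ.real A - μ.real B) + s := by ring

theorem deviation_recursion {d : ℕ}
    (μ : Measure (EuclideanSpace ℝ (Fin d))) [IsProbabilityMeasure μ]
    (β : ℝ → ℝ) (hβ : Antitone β) (hβnonneg : ∀ s ∈ Set.Ioo (0:ℝ) (1/4), 0 ≤ β s)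
    (hWP : ∀ f : EuclideanSpace ℝ (Fin d) → ℝ, LocallyLipschitz f →
      BddAbove (Set.range f) → BddBelow (Set.range f) →
      ∀ s ∈ Set.Ioo (0:ℝ) (1/4),
        ∫ x, (f x)^2 ∂μ - (∫ x, f x ∂μ)^2 ≤
          β s * ∫ x, ‖fderiv ℝ f x‖^2 ∂μ + s * (osc f)^2)
    (L : NNReal) (F : EuclideanSpace ℝ (Fin d) → ℝ) (hF : LipschitzWith L F)
    (m : ℝ) (hm₁ : μ {x | m < F x} ≤ 1/2) (hm₂ : μ {x | F x < m} ≤ 1/2) :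
    ∀ k : ℕ, 1 ≤ k → ∀ s ∈ Set.Ioo (0:ℝ) (1/4),
      (μ {x | (k : ℝ) < F x - m}).toReal ≤
        s / (1 + (L:ℝ)^2 * β s)
        + (μ {x | (k : ℝ) - 1 < F x - m}).toReal
          * (1 - 1 / (2 * (1 + (L:ℝ)^2 * β s))) :=
  deviation_recursion_general μ β hβnonneg hWP L F hF m hm₁
end
end

section
/- Suppose μ satisfies a weak Poincaré inequality with nonincreasing β, and F : ℝ^d → ℝ is L-Lipschitz with median m. Then for every integer k ≥ 1 and s ∈ (0,1/4): μ(F − m > k) ≤ 2s + (√e/2) exp( −k/(4L√β(s)) ). -/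
open MeasureTheory Set

noncomputable section

/-! Test the weak Poincaré inequality on the ramp that rises from 0 to 1 while `F - m` runs
from `a` to `c`, and write `r t = μ (F - m > t)`. The ramp's variance is at least
`r c * (1 - r a)` (it is 1 on one set and 0 on the other), its energy at most
`(L / (c - a))² * (r a - r c)` (its gradient lives on `a < F - m < c`), and its oscillation at
most 1. Steps of length `c - a = L √β(s)` give `r (a + L √β(s)) * (2 - r a) ≤ r a + s`.
With `s = (1 - x²) / 4` the map `r ↦ (r + s) / (2 - r)` has fixed points `(1 ∓ x) / 2` and is
multiplication by `(3 - x) / (3 + x)` in the coordinate `(r - (1 - x) / 2) / ((1 + x) / 2 - r)`.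
Iterating `⌊k / (L √β(s))⌋` times from `r 0 ≤ 1 / 2` (the median) and comparing powers of
`(3 - x) / (3 + x)` with `exp (-1 / 4)` gives the bound. -/

open ProbabilityTheory NNReal Real

def WeakPoincare {E : Type*} [NormedAddCommGroup E] [NormedSpace ℝ E] [MeasurableSpace E]
    (μ : Measure E) (β s : ℝ) : Prop :=
  ∀ f : E → ℝ, LocallyLipschitz f → BddAbove (range f) → BddBelow (range f) →
    ∫ x, (f x) ^ 2 ∂μ - (∫ x, f x ∂μ) ^ 2 ≤ β * ∫ x, ‖fderiv ℝ f x‖ ^ 2 ∂μ + s * (osc f) ^ 2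

theorem mul_measureReal_le_variance {Ω : Type*} [MeasurableSpace Ω] {μ : Measure Ω}
    [IsProbabilityMeasure μ] {g : Ω → ℝ} (hg : MemLp g 2 μ) {A B : Set Ω}
    (hA : MeasurableSet A) (hB : MeasurableSet B)
    (hgA : ∀ x ∈ A, g x = 1) (hgB : ∀ x ∈ B, g x = 0) :
    μ.real A * μ.real B ≤ variance g μ := by
  set e := ∫ x, g x ∂μ
  have hdisj : Disjoint A B :=
    disjoint_left.2 fun x hxA hxB => one_ne_zero ((hgA x hxA).symm.trans (hgB x hxB))
  have hsum : μ.real A + μ.real B ≤ 1 := by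
    rw [← measureReal_union hdisj hB]; exact measureReal_le_one
  have hpoint : ∀ x, A.indicator (fun _ => (1 - e) ^ 2) x + B.indicator (fun _ => e ^ 2) x
      ≤ (g x - e) ^ 2 := by
    intro x
    by_cases hxA : x ∈ A
    · have hxB : x ∉ B := disjoint_left.1 hdisj hxA
      simp [hxA, hxB, hgA x hxA]
    · by_cases hxB : x ∈ B
      · simp [hxA, hxB, hgB x hxB]
      · simp [hxA, hxB, sq_nonneg]
  have hlower : μ.real A * (1 - e) ^ 2 + μ.real B * e ^ 2 ≤ variance g μ := by
    rw [variance_eq_integral hg.aemeasurable]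
    calc μ.real A * (1 - e) ^ 2 + μ.real B * e ^ 2
        = ∫ x, A.indicator (fun _ => (1 - e) ^ 2) x + B.indicator (fun _ => e ^ 2) x ∂μ := by
          rw [integral_add ((integrable_const _).indicator hA) ((integrable_const _).indicator hB),
            integral_indicator_const _ hA, integral_indicator_const _ hB, smul_eq_mul, smul_eq_mul]
      _ ≤ ∫ x, (g x - e) ^ 2 ∂μ :=
          integral_mono
            (((integrable_const _).indicator hA).add ((integrable_const _).indicator hB))
            ((hg.sub (memLp_const e)).integrable_sq) hpoint
  have hA0 : 0 ≤ μ.real A := measureReal_nonneg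
  have hB0 : 0 ≤ μ.real B := measureReal_nonneg
  -- `(a + b) (a (1 - e)² + b e²) - a b = (a (1 - e) - b e)²` and `a + b ≤ 1`
  nlinarith [sq_nonneg (μ.real A * (1 - e) - μ.real B * e),
    mul_nonneg (sub_nonneg.2 hsum) (add_nonneg (mul_nonneg hA0 (sq_nonneg (1 - e)))
      (mul_nonneg hB0 (sq_nonneg e)))]

theorem sq_osc_le {α : Type*} [Nonempty α] {f : α → ℝ} {a b : ℝ} (hf : ∀ x, f x ∈ Icc a b) :
    osc f ^ 2 ≤ (b - a) ^ 2 := by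
  have hrange : range f ⊆ Icc a b := range_subset_iff.2 hf
  have hsup : sSup (range f) ≤ b := csSup_le (range_nonempty f) fun _ hy => (hrange hy).2
  have hinf : a ≤ sInf (range f) := le_csInf (range_nonempty f) fun _ hy => (hrange hy).1
  have hnonneg : 0 ≤ osc f :=
    sub_nonneg.2 (csInf_le_csSup (range_nonempty f) (bddBelow_Icc.mono hrange)
      (bddAbove_Icc.mono hrange))
  exact pow_le_pow_left₀ hnonneg (by unfold osc; linarith) 2

def ramp (a c t : ℝ) : ℝ := max 0 (min 1 ((t - a) / (c - a)))

section ramp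

variable {a c : ℝ}

theorem ramp_mem_Icc (t : ℝ) : ramp a c t ∈ Icc 0 1 :=
  ⟨le_max_left _ _, max_le zero_le_one (min_le_left _ _)⟩

theorem ramp_of_le (hac : a < c) {t : ℝ} (ht : t ≤ a) : ramp a c t = 0 :=
  max_eq_left (min_le_of_right_le (div_nonpos_of_nonpos_of_nonneg (by linarith) (by linarith)))

theorem ramp_of_ge (hac : a < c) {t : ℝ} (ht : c ≤ t) : ramp a c t = 1 := by
  have : 1 ≤ (t - a) / (c - a) := (one_le_div (by linarith)).2 (by linarith)
  simp [ramp, min_eq_left this]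

theorem lipschitzWith_ramp (hac : a < c) : LipschitzWith (Real.toNNReal (c - a)⁻¹) (ramp a c) := by
  have hlin : LipschitzWith (Real.toNNReal (c - a)⁻¹) fun t : ℝ => (t - a) / (c - a) := by
    refine LipschitzWith.of_dist_le_mul fun t u => ?_
    rw [Real.coe_toNNReal _ (inv_nonneg.2 (by linarith)), Real.dist_eq, Real.dist_eq,
      div_sub_div_same, sub_sub_sub_cancel_right, abs_div, abs_of_pos (sub_pos.2 hac),
      div_eq_inv_mul]
  exact (hlin.const_min 1).const_max 0

end ramp

section

variable {E : Type*} [NormedAddCommGroup E] [NormedSpace ℝ E]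

theorem integral_norm_fderiv_sq_le [MeasurableSpace E] {μ : Measure E} [IsFiniteMeasure μ]
    {f : E → ℝ} {K : ℝ≥0} (hf : LipschitzWith K f) {U : Set E} (hU : MeasurableSet U)
    (hfU : ∀ x ∉ U, fderiv ℝ f x = 0) :
    ∫ x, ‖fderiv ℝ f x‖ ^ 2 ∂μ ≤ K ^ 2 * μ.real U := by
  have hpoint : ∀ x, ‖fderiv ℝ f x‖ ^ 2 ≤ U.indicator (fun _ => (K : ℝ) ^ 2) x := by
    intro x
    by_cases hx : x ∈ U
    · simpa [hx] using pow_le_pow_left₀ (norm_nonneg _) (norm_fderiv_le_of_lipschitz ℝ hf) 2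
    · simp [hx, hfU x hx]
  calc ∫ x, ‖fderiv ℝ f x‖ ^ 2 ∂μ ≤ ∫ x, U.indicator (fun _ => (K : ℝ) ^ 2) x ∂μ :=
        integral_mono_of_nonneg (.of_forall fun x => by positivity)
          ((integrable_const _).indicator hU) (.of_forall hpoint)
    _ = K ^ 2 * μ.real U := by rw [integral_indicator_const _ hU, smul_eq_mul, mul_comm]

theorem fderiv_ramp_comp_eq_zero {G : E → ℝ} {a c : ℝ} (hac : a < c) {x : E}
    (hx : x ∉ {y | a < G y ∧ G y < c}) :
    fderiv ℝ (fun y => ramp a c (G y)) x = 0 := by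
  rcases le_or_gt (G x) a with hxa | hax
  · refine IsLocalMin.fderiv_eq_zero (.of_forall fun y => ?_)
    change ramp a c (G x) ≤ ramp a c (G y)
    rw [ramp_of_le hac hxa]
    exact (ramp_mem_Icc _).1
  · refine IsLocalMax.fderiv_eq_zero (.of_forall fun y => ?_)
    change ramp a c (G y) ≤ ramp a c (G x)
    rw [ramp_of_ge hac (not_lt.1 fun hxc => hx ⟨hax, hxc⟩)]
    exact (ramp_mem_Icc _).2

theorem WeakPoincare.measureReal_lt_mul_le [MeasurableSpace E] [OpensMeasurableSpace E]
    [Nonempty E] {μ : Measure E} [IsProbabilityMeasure μ]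
    {β s : ℝ} (hWP : WeakPoincare μ β s) (hβ : 0 ≤ β) (hs : 0 ≤ s)
    {G : E → ℝ} {L : ℝ≥0} (hG : LipschitzWith L G) {a c : ℝ} (hac : a < c) :
    μ.real {x | c < G x} * (1 - μ.real {x | a < G x}) ≤
      β * (L / (c - a)) ^ 2 * (μ.real {x | a < G x} - μ.real {x | c < G x}) + s := by
  set g : E → ℝ := fun x => ramp a c (G x)
  have hg_lip : LipschitzWith (Real.toNNReal (c - a)⁻¹ * L) g := (lipschitzWith_ramp hac).comp hG
  have hg_mem : ∀ x, g x ∈ Icc 0 1 := fun x => ramp_mem_Icc _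
  have hGm : Measurable G := hG.continuous.measurable
  have hmeas : ∀ t, MeasurableSet {x | t < G x} := fun t => measurableSet_lt measurable_const hGm
  have hg_memLp : MemLp g 2 μ := by
    refine .of_bound hg_lip.continuous.aestronglyMeasurable 1 (.of_forall fun x => ?_)
    rw [Real.norm_eq_abs, abs_of_nonneg (hg_mem x).1]
    exact (hg_mem x).2
  have hvar : μ.real {x | c < G x} * (1 - μ.real {x | a < G x}) ≤ variance g μ := by
    rw [← probReal_compl_eq_one_sub (hmeas a)]
    exact mul_measureReal_le_variance hg_memLp (hmeas c) (hmeas a).compl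
      (fun x hx => ramp_of_ge hac (le_of_lt hx)) (fun x hx => ramp_of_le hac (not_lt.1 hx))
  have henergy : ∫ x, ‖fderiv ℝ g x‖ ^ 2 ∂μ ≤
      (L / (c - a)) ^ 2 * (μ.real {x | a < G x} - μ.real {x | c < G x}) := by
    have hband : μ.real {x | a < G x ∧ G x < c} ≤ μ.real {x | a < G x} - μ.real {x | c < G x} := by
      calc μ.real {x | a < G x ∧ G x < c} ≤ μ.real ({x | a < G x} \ {x | c < G x}) :=
            measureReal_mono fun x hx => ⟨hx.1, not_lt.2 hx.2.le⟩
        _ = _ := measureReal_sdiff (fun x hx => hac.trans hx) (hmeas c)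
    calc ∫ x, ‖fderiv ℝ g x‖ ^ 2 ∂μ ≤ ((Real.toNNReal (c - a)⁻¹ * L : ℝ≥0) : ℝ) ^ 2 *
          μ.real {x | a < G x ∧ G x < c} :=
        integral_norm_fderiv_sq_le hg_lip ((hmeas a).inter (measurableSet_lt hGm measurable_const))
          fun x hx => fderiv_ramp_comp_eq_zero hac hx
      _ ≤ (L / (c - a)) ^ 2 * (μ.real {x | a < G x} - μ.real {x | c < G x}) := by
        rw [NNReal.coe_mul, Real.coe_toNNReal _ (inv_nonneg.2 (sub_pos.2 hac).le), ← div_eq_inv_mul]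
        exact mul_le_mul_of_nonneg_left hband (sq_nonneg _)
  have hosc : osc g ^ 2 ≤ 1 := by simpa using sq_osc_le hg_mem
  have hrange := range_subset_iff.2 hg_mem
  have hpoinc := hWP g hg_lip.locallyLipschitz (bddAbove_Icc.mono hrange) (bddBelow_Icc.mono hrange)
  have hvar_eq : variance g μ = ∫ x, g x ^ 2 ∂μ - (∫ x, g x ∂μ) ^ 2 := variance_eq_sub hg_memLp
  calc μ.real {x | c < G x} * (1 - μ.real {x | a < G x})
      ≤ β * ∫ x, ‖fderiv ℝ g x‖ ^ 2 ∂μ + s * osc g ^ 2 := hvar.trans (hvar_eq ▸ hpoinc)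
    _ ≤ β * (L / (c - a)) ^ 2 * (μ.real {x | a < G x} - μ.real {x | c < G x}) + s * 1 := by
      rw [mul_assoc]
      gcongr
    _ = _ := by rw [mul_one]

theorem WeakPoincare.measureReal_lt_add_mul_le [MeasurableSpace E] [OpensMeasurableSpace E]
    [Nonempty E] {μ : Measure E} [IsProbabilityMeasure μ] {β s : ℝ} (hWP : WeakPoincare μ β s)
    (hβ : 0 < β) (hs : 0 ≤ s) {G : E → ℝ} {L : ℝ≥0} (hG : LipschitzWith L G) (hL : 0 < (L : ℝ))
    (a : ℝ) :
    μ.real {x | a + L * √β < G x} * (2 - μ.real {x | a < G x}) ≤ μ.real {x | a < G x} + s := by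
  have hstep := hWP.measureReal_lt_mul_le hβ.le hs hG
    (lt_add_of_pos_right a (mul_pos hL (sqrt_pos.2 hβ)))
  have hq : β * (L / (a + L * √β - a)) ^ 2 = 1 := by
    rw [add_sub_cancel_left, div_pow, mul_pow, sq_sqrt hβ.le]
    field_simp [hβ.ne']
  rw [hq] at hstep
  linarith

end

theorem measureReal_lt_sub_le_half {Ω : Type*} [MeasurableSpace Ω] {μ : Measure Ω} {F : Ω → ℝ}
    {m t : ℝ} (hm : μ {x | m < F x} ≤ 1 / 2) (ht : 0 ≤ t) : μ.real {x | t < F x - m} ≤ 1 / 2 := by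
  have hsub : {x | t < F x - m} ⊆ {x | m < F x} := fun x (hx : t < F x - m) =>
    show m < F x by linarith
  calc μ.real {x | t < F x - m} ≤ (1 / 2 : ENNReal).toReal :=
        ENNReal.toReal_mono (by norm_num) ((measure_mono hsub).trans hm)
    _ = 1 / 2 := by norm_num

def mobiusCoord (x r : ℝ) : ℝ := (r - (1 - x) / 2) / ((1 + x) / 2 - r)

section mobius

variable {x q s : ℝ}

theorem mobiusCoord_le_one {r : ℝ} (hx : 0 < x) (hr : r ≤ 1 / 2) : mobiusCoord x r ≤ 1 := by
  rw [mobiusCoord, div_le_one (by linarith)]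
  linarith

theorem mobiusCoord_le_mul_of_step (hx : 0 < x) (hq : 0 ≤ q) (hs : s = (1 - x ^ 2) / 4)
    {r r' : ℝ} (hr : r ≤ 1 / 2) (hstep : r' * (1 - r + q) ≤ q * r + s) :
    mobiusCoord x r' ≤ (1 - x + 2 * q) / (1 + x + 2 * q) * mobiusCoord x r := by
  have hd : 0 < (1 + x) / 2 - r := by linarith
  have hD : 0 < 1 - r + q := by linarith
  have hr'_lt : r' < (1 + x) / 2 := by
    by_contra! hcon
    nlinarith [mul_le_mul_of_nonneg_right hcon hD.le, mul_nonneg (show 0 ≤ 1 / 2 - r by linarith)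
      (show 0 ≤ (1 + x) / 2 + q by linarith), mul_nonneg hx.le hq,
      mul_pos hx (show 0 < 1 + x by linarith)]
  have hd' : 0 < (1 + x) / 2 - r' := by linarith
  have key : (r' - (1 - x) / 2) * (((1 + x) / 2 - r) * (1 + x + 2 * q))
      ≤ (1 - x + 2 * q) * ((r - (1 - x) / 2) * ((1 + x) / 2 - r')) := by
    have iden : (1 - r + q) * ((1 - x + 2 * q) * ((r - (1 - x) / 2) * ((1 + x) / 2 - r'))
        - (r' - (1 - x) / 2) * (((1 + x) / 2 - r) * (1 + x + 2 * q)))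
        = 2 * x * (1 + q - r) * (q * r + s - r' * (1 - r + q)) := by
      rw [hs]; ring
    have : 0 ≤ 2 * x * (1 + q - r) * (q * r + s - r' * (1 - r + q)) :=
      mul_nonneg (mul_nonneg (by linarith) (by linarith)) (by linarith)
    nlinarith
  rw [mobiusCoord, mobiusCoord, div_mul_div_comm, div_le_div_iff₀ hd' (by positivity)]
  linarith

theorem mobiusCoord_le_pow {r : ℝ → ℝ} {h : ℝ} (hx : 0 < x) (hx1 : x ≤ 1) (hq : 0 ≤ q)
    (hs : s = (1 - x ^ 2) / 4) (hh : 0 ≤ h) (hr : ∀ t, 0 ≤ t → r t ≤ 1 / 2)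
    (hstep : ∀ a, 0 ≤ a → r (a + h) * (1 - r a + q) ≤ q * r a + s) :
    ∀ (n : ℕ) (t : ℝ), n * h ≤ t →
      mobiusCoord x (r t) ≤ ((1 - x + 2 * q) / (1 + x + 2 * q)) ^ n := by
  have hρ : 0 ≤ (1 - x + 2 * q) / (1 + x + 2 * q) := div_nonneg (by linarith) (by linarith)
  intro n
  induction n with
  | zero =>
    intro t ht
    simpa using mobiusCoord_le_one hx (hr t (by simpa using ht))
  | succ n ih =>
    intro t ht
    have ha : n * h ≤ t - h := by push_cast at ht; linarith
    have hstep' := hstep (t - h) ((mul_nonneg n.cast_nonneg hh).trans ha)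
    rw [sub_add_cancel] at hstep'
    calc mobiusCoord x (r t)
        ≤ (1 - x + 2 * q) / (1 + x + 2 * q) * mobiusCoord x (r (t - h)) :=
          mobiusCoord_le_mul_of_step hx hq hs (hr _ ((mul_nonneg n.cast_nonneg hh).trans ha)) hstep'
      _ ≤ (1 - x + 2 * q) / (1 + x + 2 * q) * ((1 - x + 2 * q) / (1 + x + 2 * q)) ^ n :=
          mul_le_mul_of_nonneg_left (ih _ ha) hρ
      _ = _ := (pow_succ' _ _).symm

theorem le_of_mobiusCoord_le {v E S : ℝ} (hx : 0 < x) (hS : S ≤ 1 / 2) (hv : 0 ≤ v) (hE : 0 ≤ E)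
    (hSv : mobiusCoord x S ≤ v) (hvE : v * (x * (1 + x)) ≤ E + x * (1 - x)) :
    S ≤ (1 - x ^ 2) / 2 + E / 2 := by
  rw [mobiusCoord, div_le_iff₀ (by linarith)] at hSv
  nlinarith [mul_nonneg hv hE]

theorem three_quarters_pow_le_exp (n : ℕ) : (3 / 4 : ℝ) ^ n ≤ exp (-n / 4) := by
  have h : 3 / 4 ≤ exp (-1 / 4) := by
    have := exp_bound_div_one_sub_of_interval' (x := 1 / 4) (by norm_num) (by norm_num)
    rw [neg_div, exp_neg, le_inv_comm₀ (by norm_num) (exp_pos _)]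
    linarith
  rw [show -(n : ℝ) / 4 = n * (-1 / 4) by ring, exp_nat_mul]
  exact pow_le_pow_left₀ (by norm_num) h n

theorem pow_mul_le_exp_add {n : ℕ} (hn : 2 ≤ n) (hx : 0 ≤ x) (hx1 : x ≤ 1) :
    ((3 - x) / (3 + x)) ^ n * (x * (1 + x)) ≤ exp ((1 - n) / 4) + x * (1 - x) := by
  set ρ := (3 - x) / (3 + x)
  have hρ0 : 0 ≤ ρ := div_nonneg (by linarith) (by linarith)
  have hρ1 : ρ ≤ 1 := (div_le_one (by linarith)).2 (by linarith)
  have hx1' : 0 ≤ x * (1 - x) := mul_nonneg hx (by linarith)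
  rcases le_or_gt n 3 with hn3 | hn4
  · have hsq : ρ ^ 2 * (x * (1 + x)) ≤ 1 / 2 := by
      rw [div_pow, div_mul_eq_mul_div, div_le_iff₀ (by positivity)]
      nlinarith [mul_nonneg (sq_nonneg (1 - x)) (show 0 ≤ 9 + 6 * x - 2 * x ^ 2 by nlinarith)]
    have hexp : 1 / 2 ≤ exp ((1 - n) / 4) := by
      have := exp_bound_div_one_sub_of_interval' (x := 1 / 2) (by norm_num) (by norm_num)
      calc (1 : ℝ) / 2 ≤ exp (-(1 / 2)) := by
            rw [exp_neg, le_inv_comm₀ (by norm_num) (exp_pos _)]; linarith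
        _ ≤ exp ((1 - n) / 4) := exp_le_exp.2 (by
            have : (n : ℝ) ≤ 3 := by exact_mod_cast hn3
            linarith)
    calc ρ ^ n * (x * (1 + x)) ≤ ρ ^ 2 * (x * (1 + x)) :=
          mul_le_mul_of_nonneg_right (pow_le_pow_of_le_one hρ0 hρ1 hn) (by positivity)
      _ ≤ exp ((1 - n) / 4) + x * (1 - x) := by linarith
  obtain ⟨m, rfl⟩ : ∃ m, n = m + 4 := ⟨n - 4, by omega⟩
  rcases le_or_gt (3 / 4) x with hx34 | hx34
  · have hρ35 : ρ ≤ 3 / 5 := (div_le_iff₀ (by linarith)).2 (by linarith)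
    have hexp : (3 / 4 : ℝ) ^ (m + 3) ≤ exp ((1 - ↑(m + 4)) / 4) := by
      convert three_quarters_pow_le_exp (m + 3) using 2
      push_cast; ring
    calc ρ ^ (m + 4) * (x * (1 + x)) ≤ (3 / 5) ^ (m + 4) * 2 := by
          gcongr; nlinarith
      _ = (3 / 5) ^ m * (2 * (3 / 5) ^ 4) := by ring
      _ ≤ (3 / 4) ^ m * (3 / 4) ^ 3 := by gcongr <;> norm_num
      _ ≤ exp ((1 - ↑(m + 4)) / 4) + x * (1 - x) := by rw [← pow_add]; linarith
  · -- `ρ ^ 4 ≤ (1 - x) / (1 + x)` alone already forces `S ≤ (1 - x²) / 2` downstream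
    have hρ4 : ρ ^ 4 * (1 + x) ≤ 1 - x := by
      rw [div_pow, div_mul_eq_mul_div, div_le_iff₀ (by positivity)]
      nlinarith [mul_nonneg hx (show 0 ≤ 27 - 42 * x ^ 2 - x ^ 4 by nlinarith)]
    calc ρ ^ (m + 4) * (x * (1 + x)) ≤ ρ ^ 4 * (x * (1 + x)) :=
          mul_le_mul_of_nonneg_right (pow_le_pow_of_le_one hρ0 hρ1 (by omega)) (by positivity)
      _ = x * (ρ ^ 4 * (1 + x)) := by ring
      _ ≤ x * (1 - x) := mul_le_mul_of_nonneg_left hρ4 hx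
      _ ≤ exp ((1 - ↑(m + 4)) / 4) + x * (1 - x) := by linarith [exp_pos ((1 - ↑(m + 4)) / 4)]

theorem le_add_exp_of_mobiusCoord_le_pow {S : ℝ} (hx : 0 < x) (hx1 : x < 1) (hS : S ≤ 1 / 2)
    (n : ℕ) (hSn : mobiusCoord x S ≤ ((3 - x) / (3 + x)) ^ n) :
    S ≤ (1 - x ^ 2) / 2 + exp ((1 - n) / 4) / 2 := by
  rcases le_or_gt 2 n with hn | hn
  · exact le_of_mobiusCoord_le hx hS (pow_nonneg (div_nonneg (by linarith) (by linarith)) n)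
      (exp_pos _).le hSn (pow_mul_le_exp_add hn hx.le hx1.le)
  · have : 1 ≤ exp ((1 - n) / 4) := one_le_exp (by
      have : (n : ℝ) ≤ 1 := by exact_mod_cast Nat.lt_succ_iff.1 hn
      linarith)
    nlinarith

end mobius

theorem exp_one_sub_floor_div_le (k h : ℝ) :
    exp ((1 - ⌊k / h⌋₊) / 4) ≤ √(exp 1) * exp (-k / (4 * h)) := by
  rw [← exp_half, ← exp_add]
  have := Nat.lt_floor_add_one (k / h)
  have hkh : -k / (4 * h) = -(k / h) / 4 := by ring
  exact exp_le_exp.2 (by rw [hkh]; linarith)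

theorem deviation_bound_general {d : ℕ}
    (μ : Measure (EuclideanSpace ℝ (Fin d))) [IsProbabilityMeasure μ]
    (β : ℝ → ℝ) (hβpos : ∀ s ∈ Set.Ioo (0:ℝ) (1/4), 0 < β s)
    (hWP : ∀ f : EuclideanSpace ℝ (Fin d) → ℝ, LocallyLipschitz f →
      BddAbove (Set.range f) → BddBelow (Set.range f) →
      ∀ s ∈ Set.Ioo (0:ℝ) (1/4),
        ∫ x, (f x)^2 ∂μ - (∫ x, f x ∂μ)^2 ≤
          β s * ∫ x, ‖fderiv ℝ f x‖^2 ∂μ + s * (osc f)^2)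
    (L : NNReal) (hL : 0 < (L:ℝ))
    (F : EuclideanSpace ℝ (Fin d) → ℝ) (hF : LipschitzWith L F)
    (m : ℝ) (hm₁ : μ {x | m < F x} ≤ 1/2) :
    ∀ k : ℕ, 1 ≤ k → ∀ s ∈ Set.Ioo (0:ℝ) (1/4),
      (μ {x | (k : ℝ) < F x - m}).toReal ≤
        2 * s + (Real.sqrt (Real.exp 1) / 2)
          * Real.exp (-(k : ℝ) / (4 * (L:ℝ) * Real.sqrt (β s))) := by
  intro k _ s hs
  have hβ := hβpos s hs
  set h := (L : ℝ) * √(β s)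
  have hh : 0 < h := mul_pos hL (sqrt_pos.2 hβ)
  set x := √(1 - 4 * s)
  have hx : 0 < x := sqrt_pos.2 (by linarith [hs.2])
  have hx2 : x ^ 2 = 1 - 4 * s := sq_sqrt (by linarith [hs.2])
  have hx1 : x < 1 := by nlinarith [hs.1]
  have hG : LipschitzWith L fun z => F z - m :=
    .of_dist_le_mul fun z w => by rw [dist_sub_right]; exact hF.dist_le_mul z w
  have hstep := WeakPoincare.measureReal_lt_add_mul_le (fun f hf h₁ h₂ => hWP f hf h₁ h₂ s hs)
    hβ hs.1.le hG hL
  have hiter := mobiusCoord_le_pow (s := s) hx hx1.le zero_le_one (by linarith) hh.le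
    (fun t ht => measureReal_lt_sub_le_half hm₁ ht) (fun a _ => by linarith [hstep a])
    ⌊k / h⌋₊ k ((le_div_iff₀ hh).1 (Nat.floor_le (by positivity)))
  rw [show (1 - x + 2 * 1) / (1 + x + 2 * 1) = (3 - x) / (3 + x) by ring] at hiter
  calc (μ {z | (k : ℝ) < F z - m}).toReal
      ≤ (1 - x ^ 2) / 2 + exp ((1 - ⌊k / h⌋₊) / 4) / 2 :=
        le_add_exp_of_mobiusCoord_le_pow hx hx1 (measureReal_lt_sub_le_half hm₁ k.cast_nonneg) _
          hiter
    _ ≤ 2 * s + √(exp 1) / 2 * exp (-k / (4 * L * √(β s))) := by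
      rw [hx2, div_mul_eq_mul_div, mul_assoc 4]
      gcongr ?_ + ?_ / 2
      · linarith
      · exact exp_one_sub_floor_div_le k h

theorem deviation_bound {d : ℕ}
    (μ : Measure (EuclideanSpace ℝ (Fin d))) [IsProbabilityMeasure μ]
    (β : ℝ → ℝ) (hβ : Antitone β) (hβpos : ∀ s ∈ Set.Ioo (0:ℝ) (1/4), 0 < β s)
    (hWP : ∀ f : EuclideanSpace ℝ (Fin d) → ℝ, LocallyLipschitz f →
      BddAbove (Set.range f) → BddBelow (Set.range f) →
      ∀ s ∈ Set.Ioo (0:ℝ) (1/4),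
        ∫ x, (f x)^2 ∂μ - (∫ x, f x ∂μ)^2 ≤
          β s * ∫ x, ‖fderiv ℝ f x‖^2 ∂μ + s * (osc f)^2)
    (L : NNReal) (hL : 0 < (L:ℝ))
    (F : EuclideanSpace ℝ (Fin d) → ℝ) (hF : LipschitzWith L F)
    (m : ℝ) (hm₁ : μ {x | m < F x} ≤ 1/2) (hm₂ : μ {x | F x < m} ≤ 1/2) :
    ∀ k : ℕ, 1 ≤ k → ∀ s ∈ Set.Ioo (0:ℝ) (1/4),
      (μ {x | (k : ℝ) < F x - m}).toReal ≤
        2 * s + (Real.sqrt (Real.exp 1) / 2)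
          * Real.exp (-(k : ℝ) / (4 * (L:ℝ) * Real.sqrt (β s))) :=
  deviation_bound_general μ β hβpos hWP L hL F hF m hm₁
end
end

section
/- Let μ be a probability measure on a metric measure space with isoperimetric function I_μ, and assume the product measures μ^n. Then for all n ≥ 1 and a ∈ (0,1): I_{μ^n}(a^n) ≤ n·a^{n−1}·I_μ(a). -/
/-!
Thickening commutes with products up to inclusion, `(Aⁿ)_h ⊆ (A_h)ⁿ`, so the new boundary layer
`(Aⁿ)_h \ Aⁿ` is covered by `n` slabs, each the product of one copy of `A_h \ A` with `n - 1`
copies of `A_h`. Dividing by `h` and letting `h → 0`, `μ (A_h) → μ (closure A)`, which equals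
`μ A` unless `closure A \ A` has positive mass, in which case the boundary measure of `A` is
infinite. Hence `μⁿ_s(∂Aⁿ) ≤ n μ(A)ⁿ⁻¹ μ_s(∂A)`, and `Aⁿ` is a competitor of measure `aⁿ`.
-/

open MeasureTheory Set Metric Filter

noncomputable section

/-- Boundary measure (Minkowski content style lower limit) of a set. -/
def boundaryMeasure {α : Type*} [MetricSpace α] [MeasurableSpace α]
    (μ : Measure α) (A : Set α) : ENNReal :=
  Filter.liminf (fun h : ℝ => μ (Metric.thickening h A \ A) / ENNReal.ofReal h)
    (nhdsWithin 0 (Set.Ioi 0))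

/-- Isoperimetric profile of a measure. -/
def isoProfile {α : Type*} [MetricSpace α] [MeasurableSpace α]
    (μ : Measure α) (t : ℝ) : ENNReal :=
  sInf { r | ∃ A : Set α, MeasurableSet A ∧ μ A = ENNReal.ofReal t ∧
    r = boundaryMeasure μ A }

open scoped ENNReal Topology

theorem Set.univ_pi_sdiff_univ_pi_subset_iUnion_update {ι : Type*} {π : ι → Type*}
    [DecidableEq ι] (s t : ∀ i, Set (π i)) :
    univ.pi s \ univ.pi t ⊆ ⋃ i, univ.pi (Function.update s i (s i \ t i)) := by
  rintro x ⟨hs, ht⟩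
  obtain ⟨i, hi⟩ : ∃ i, x i ∉ t i := by
    by_contra! h
    exact ht fun i _ => h i
  refine mem_iUnion.2 ⟨i, fun j _ => ?_⟩
  rcases eq_or_ne j i with rfl | hj
  · simpa using ⟨hs j trivial, hi⟩
  · simpa [Function.update_of_ne hj] using hs j trivial

theorem Metric.thickening_univ_pi_subset {ι : Type*} [Fintype ι] {π : ι → Type*}
    [∀ i, PseudoEMetricSpace (π i)] (δ : ℝ) (s : ∀ i, Set (π i)) :
    thickening δ (univ.pi s) ⊆ univ.pi fun i => thickening δ (s i) := by
  intro x hx i _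
  obtain ⟨y, hy, hxy⟩ := (mem_thickening_iff_exists_edist_lt _ _).1 hx
  exact (mem_thickening_iff_exists_edist_lt _ _).2
    ⟨y i, hy i trivial, (edist_le_pi_edist x y i).trans_lt hxy⟩

theorem MeasureTheory.Measure.pi_univ_pi_sdiff_univ_pi_le {ι : Type*} [Fintype ι]
    [DecidableEq ι] {π : ι → Type*} [∀ i, MeasurableSpace (π i)] (μ : ∀ i, Measure (π i))
    [∀ i, SigmaFinite (μ i)] (s t : ∀ i, Set (π i)) :
    Measure.pi μ (univ.pi s \ univ.pi t) ≤
      ∑ i, μ i (s i \ t i) * ∏ j ∈ Finset.univ.erase i, μ j (s j) := by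
  refine (measure_mono (univ_pi_sdiff_univ_pi_subset_iUnion_update s t)).trans <|
    (measure_iUnion_fintype_le _ _).trans (Finset.sum_le_sum fun i _ => le_of_eq ?_)
  rw [Measure.pi_pi, ← Finset.mul_prod_erase _ _ (Finset.mem_univ i)]
  refine congr_arg₂ _ (by simp) (Finset.prod_congr rfl fun j hj => ?_)
  rw [Function.update_of_ne (Finset.ne_of_mem_erase hj)]

section Product

variable {ι α : Type*} [Fintype ι] [MetricSpace α] [MeasurableSpace α]

theorem measure_pi_thickening_univ_pi_sdiff_le (μ : Measure α) [SigmaFinite μ] (δ : ℝ)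
    (A : Set α) :
    Measure.pi (fun _ : ι => μ)
        (thickening δ (univ.pi fun _ => A) \ univ.pi fun _ => A) ≤
      Fintype.card ι * μ (thickening δ A) ^ (Fintype.card ι - 1) *
        μ (thickening δ A \ A) := by
  classical
  calc _ ≤ Measure.pi (fun _ : ι => μ)
        ((univ.pi fun _ => thickening δ A) \ univ.pi fun _ => A) :=
        measure_mono (sdiff_subset_sdiff_left (thickening_univ_pi_subset δ _))
    _ ≤ _ := Measure.pi_univ_pi_sdiff_univ_pi_le _ _ _
    _ = _ := by
        simp only [Finset.prod_const, Finset.card_erase_of_mem (Finset.mem_univ _),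
          Finset.card_univ, Finset.sum_const, nsmul_eq_mul]
        ring

theorem boundaryMeasure_eq_top_of_measure_closure_sdiff_ne_zero {μ : Measure α}
    {A : Set α} (hA : μ (closure A \ A) ≠ 0) : boundaryMeasure μ A = ∞ := by
  have h_ofReal : Tendsto ENNReal.ofReal (𝓝[>] 0) (𝓝 0) := by
    simpa using (ENNReal.continuous_ofReal.tendsto 0).mono_left nhdsWithin_le_nhds
  have h_top : Tendsto (fun h : ℝ => μ (closure A \ A) / ENNReal.ofReal h) (𝓝[>] 0) (𝓝 ∞) := by
    simpa [ENNReal.div_zero hA] using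
      ENNReal.Tendsto.div tendsto_const_nhds (Or.inl hA) h_ofReal (Or.inl ENNReal.zero_ne_top)
  refine top_le_iff.1 (h_top.liminf_eq ▸ liminf_le_liminf ?_)
  filter_upwards [self_mem_nhdsWithin] with h hh
  gcongr
  exact closure_subset_thickening hh A

variable [OpensMeasurableSpace α] (μ : Measure α) [IsFiniteMeasure μ]

theorem boundaryMeasure_pi_le_of_measure_closure {A : Set α} (hA : μ (closure A) = μ A)
    (hc : (Fintype.card ι : ℝ≥0∞) * μ A ^ (Fintype.card ι - 1) ≠ 0) :
    boundaryMeasure (Measure.pi fun _ : ι => μ) (univ.pi fun _ => A) ≤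
      Fintype.card ι * μ A ^ (Fintype.card ι - 1) * boundaryMeasure μ A := by
  set u := fun h : ℝ => (Fintype.card ι : ℝ≥0∞) * μ (thickening h A) ^ (Fintype.card ι - 1)
  set v := fun h : ℝ => μ (thickening h A \ A) / ENNReal.ofReal h
  have hu : Tendsto u (𝓝[>] 0) (𝓝 (Fintype.card ι * μ A ^ (Fintype.card ι - 1))) := by
    refine ENNReal.Tendsto.const_mul (ENNReal.Tendsto.pow ?_) (Or.inr (ENNReal.natCast_ne_top _))
    exact hA ▸ tendsto_measure_thickening ⟨1, one_pos, measure_ne_top μ _⟩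
  calc _ ≤ liminf (u * v) (𝓝[>] 0) := liminf_le_liminf <| .of_forall fun h => by
        simp only [Pi.mul_apply, u, v, ← mul_div_assoc]
        gcongr
        exact measure_pi_thickening_univ_pi_sdiff_le μ h A
    _ ≤ limsup u (𝓝[>] 0) * liminf v (𝓝[>] 0) := by
        -- `hc` excludes the case `0 * ∞ = 0`, where the liminf of a product is not controlled
        refine ENNReal.liminf_mul_le ?_ ?_ <;> rw [hu.limsup_eq]
        · exact Or.inl hc
        · exact Or.inl (by finiteness)
    _ = _ := by rw [hu.limsup_eq]; rfl

theorem boundaryMeasure_pi_le {A : Set α}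
    (hc : (Fintype.card ι : ℝ≥0∞) * μ A ^ (Fintype.card ι - 1) ≠ 0) :
    boundaryMeasure (Measure.pi fun _ : ι => μ) (univ.pi fun _ => A) ≤
      Fintype.card ι * μ A ^ (Fintype.card ι - 1) * boundaryMeasure μ A := by
  by_cases hA : μ (closure A \ A) = 0
  · refine boundaryMeasure_pi_le_of_measure_closure μ ?_ hc
    exact le_antisymm (measure_mono_ae (ae_le_set.2 hA)) (measure_mono subset_closure)
  · rw [boundaryMeasure_eq_top_of_measure_closure_sdiff_ne_zero hA, ENNReal.mul_top hc]
    exact le_top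

end Product

section Profile

variable {α : Type*} [MetricSpace α] [MeasurableSpace α] {μ : Measure α} {t : ℝ}

theorem isoProfile_le_boundaryMeasure {A : Set α} (hA : MeasurableSet A)
    (hμA : μ A = ENNReal.ofReal t) : isoProfile μ t ≤ boundaryMeasure μ A :=
  sInf_le ⟨A, hA, hμA, rfl⟩

theorem le_mul_isoProfile {r c : ℝ≥0∞} (hc₀ : c ≠ 0) (hc : c ≠ ∞)
    (h : ∀ A, MeasurableSet A → μ A = ENNReal.ofReal t → r ≤ c * boundaryMeasure μ A) :
    r ≤ c * isoProfile μ t := by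
  rw [← ENNReal.div_le_iff' hc₀ hc]
  refine le_sInf ?_
  rintro _ ⟨A, hA, hμA, rfl⟩
  exact ENNReal.div_le_of_le_mul' (h A hA hμA)

end Profile

theorem isoProfile_product_bound {α : Type*} [MetricSpace α] [MeasurableSpace α]
    [OpensMeasurableSpace α]
    (μ : Measure α) [IsProbabilityMeasure μ] (n : ℕ) (hn : 1 ≤ n)
    (a : ℝ) (ha : a ∈ Set.Ioo (0:ℝ) 1) :
    isoProfile (Measure.pi fun _ : Fin n => μ) (a^n) ≤
      (n : ENNReal) * ENNReal.ofReal (a^(n-1)) * isoProfile μ a := by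
  have hc : (n : ℝ≥0∞) * ENNReal.ofReal (a ^ (n - 1)) ≠ 0 := by
    simp [ENNReal.ofReal_eq_zero, pow_pos ha.1, Nat.one_le_iff_ne_zero.1 hn]
  refine le_mul_isoProfile hc (by finiteness) fun A hA hμA => ?_
  have hcoeff : (n : ℝ≥0∞) * ENNReal.ofReal (a ^ (n - 1)) =
      Fintype.card (Fin n) * μ A ^ (Fintype.card (Fin n) - 1) := by
    rw [hμA, Fintype.card_fin, ENNReal.ofReal_pow ha.1.le]
  calc _ ≤ boundaryMeasure (Measure.pi fun _ : Fin n => μ) (univ.pi fun _ => A) := by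
        refine isoProfile_le_boundaryMeasure (.univ_pi fun _ => hA) ?_
        simp [Measure.pi_pi, hμA, ENNReal.ofReal_pow ha.1.le]
    _ ≤ _ := hcoeff ▸ boundaryMeasure_pi_le μ (hcoeff ▸ hc)
end
end

section
/- Let dμ(x) = e^{−Φ(x)} dx be a probability measure on ℝ with Φ twice differentiable on [x₁,∞), Φ'(x) > 0 and |Φ''(x)|/Φ'(x)² ≤ 1 − ε on [x₁,∞) for some ε ∈ (0,1). Then for all x ≥ x₁: ε e^{−Φ(x)} ≤ (−e^{−Φ}/Φ')'(x) ≤ (2−ε) e^{−Φ(x)}, and (by integration) μ([x,∞)) ≤ e^{−Φ(x)}/(ε Φ'(x)) ≤ ((2−ε)/ε) μ([x,∞)). -/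
open MeasureTheory Set Filter Topology

theorem tail_estimate_from_potential
    (Φ Φ' Φ'' : ℝ → ℝ) (μ : Measure ℝ) [IsProbabilityMeasure μ]
    (hμ : μ = volume.withDensity fun t => ENNReal.ofReal (Real.exp (-Φ t)))
    (x₁ : ℝ) (ε : ℝ) (hε : ε ∈ Set.Ioo (0:ℝ) 1)
    (hd1 : ∀ x ≥ x₁, HasDerivAt Φ (Φ' x) x)
    (hd2 : ∀ x ≥ x₁, HasDerivAt Φ' (Φ'' x) x)
    (hΦ'pos : ∀ x ≥ x₁, 0 < Φ' x)
    (hratio : ∀ x ≥ x₁, |Φ'' x| / (Φ' x)^2 ≤ 1 - ε) :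
    ∀ x ≥ x₁,
      HasDerivAt (fun y => -(Real.exp (-Φ y)) / Φ' y)
        (Real.exp (-Φ x) * (1 + Φ'' x / (Φ' x)^2)) x ∧
      ε * Real.exp (-Φ x) ≤ Real.exp (-Φ x) * (1 + Φ'' x / (Φ' x)^2) ∧
      Real.exp (-Φ x) * (1 + Φ'' x / (Φ' x)^2) ≤ (2 - ε) * Real.exp (-Φ x) ∧
      (μ (Set.Ici x)).toReal ≤ Real.exp (-Φ x) / (ε * Φ' x) ∧
      Real.exp (-Φ x) / (ε * Φ' x) ≤ ((2 - ε) / ε) * (μ (Set.Ici x)).toReal := by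
  obtain ⟨hε0, hε1⟩ := hε
  set E : ℝ → ℝ := fun t => Real.exp (-Φ t) with hE
  set g : ℝ → ℝ := fun t => E t / Φ' t with hg
  set D : ℝ → ℝ := fun t => E t * (1 + Φ'' t / (Φ' t)^2) with hD
  have hEpos : ∀ t, 0 < E t := fun t => Real.exp_pos _
  have hcontΦ : ContinuousOn Φ (Ici x₁) := fun t ht =>
    (hd1 t ht).continuousAt.continuousWithinAt
  have hcontΦ' : ContinuousOn Φ' (Ici x₁) := fun t ht =>
    (hd2 t ht).continuousAt.continuousWithinAt
  have hcontE : ContinuousOn E (Ici x₁) :=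
    Real.continuous_exp.comp_continuousOn hcontΦ.neg
  have hgpos : ∀ t ≥ x₁, 0 < g t := fun t ht => div_pos (hEpos t) (hΦ'pos t ht)
  -- derivative
  have hderiv : ∀ t ≥ x₁, HasDerivAt (fun y => -(E y) / Φ' y) (D t) t := by
    intro t ht
    have hne : Φ' t ≠ 0 := (hΦ'pos t ht).ne'
    have h1 : HasDerivAt (fun y => -(E y)) (E t * Φ' t) t := by
      have := ((hd1 t ht).neg.exp).neg
      exact this.congr_deriv (by show -(E t * -Φ' t) = E t * Φ' t; ring)
    have := h1.div (hd2 t ht) hne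
    refine this.congr_deriv ?_
    simp only [hD]
    field_simp
    ring
  -- pointwise bounds
  have hbnd : ∀ t ≥ x₁, ε ≤ 1 + Φ'' t / (Φ' t)^2 ∧ 1 + Φ'' t / (Φ' t)^2 ≤ 2 - ε := by
    intro t ht
    have hsq : (0:ℝ) < (Φ' t)^2 := pow_pos (hΦ'pos t ht) 2
    have h2 : |Φ'' t / (Φ' t)^2| ≤ 1 - ε := by
      rw [abs_div, abs_of_pos hsq]; exact hratio t ht
    rw [abs_le] at h2
    constructor <;> linarith [h2.1, h2.2]
  have hDlb : ∀ t ≥ x₁, ε * E t ≤ D t := fun t ht => by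
    have h1 := (hbnd t ht).1
    have h2 := (hEpos t)
    simp only [hD]
    nlinarith
  have hDub : ∀ t ≥ x₁, D t ≤ (2 - ε) * E t := fun t ht => by
    have h1 := (hbnd t ht).2
    have h2 := (hEpos t)
    simp only [hD]
    nlinarith
  have hDnn : ∀ t ≥ x₁, 0 ≤ D t := fun t ht =>
    le_trans (by positivity) (hDlb t ht)
  -- measure identities
  have hμIci : ∀ x : ℝ, μ (Ici x) = ∫⁻ t in Ici x, ENNReal.ofReal (E t) := by
    intro x; rw [hμ, withDensity_apply _ measurableSet_Ici]
  have hInt : ∀ x ≥ x₁, IntegrableOn E (Ici x) := by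
    intro x hx
    refine ⟨(hcontE.mono (Ici_subset_Ici.mpr hx)).aestronglyMeasurable measurableSet_Ici, ?_⟩
    rw [hasFiniteIntegral_iff_ofReal (ae_of_all _ fun t => (hEpos t).le)]
    rw [← hμIci]
    exact measure_lt_top μ _
  have hT : ∀ x ≥ x₁, (μ (Ici x)).toReal = ∫ t in Ici x, E t := by
    intro x hx
    rw [hμIci, integral_eq_lintegral_of_nonneg_ae (ae_of_all _ fun t => (hEpos t).le)
      (hInt x hx).1]
  have hIE : ∀ x b, x₁ ≤ x → x₁ ≤ b → IntervalIntegrable E volume x b := by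
    intro x b hx hb
    exact (hcontE.mono (fun t ht => le_trans (le_min hx hb) ht.1)).intervalIntegrable
  -- interval integrability of D
  have hID : ∀ x b, x₁ ≤ x → x ≤ b → IntervalIntegrable D volume x b := by
    intro x b hx hxb
    rw [intervalIntegrable_iff_integrableOn_Icc_of_le hxb]
    have hmeas : AEStronglyMeasurable D (volume.restrict (Icc x b)) := by
      refine ((measurable_deriv (fun y => -(E y) / Φ' y)).aestronglyMeasurable.restrict).congr ?_
      rw [Filter.EventuallyEq, ae_restrict_iff' measurableSet_Icc]
      exact ae_of_all _ fun t ht => ((hderiv t (le_trans hx ht.1)).deriv)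
    refine Integrable.mono' (g := fun t => (2 - ε) * E t) ?_ hmeas ?_
    · exact (((hcontE.mono (fun t ht => le_trans hx ht.1)).const_smul
        ((2:ℝ) - ε)).integrableOn_compact isCompact_Icc)
    · rw [ae_restrict_iff' measurableSet_Icc]
      refine ae_of_all _ fun t ht => ?_
      have h1 := hDnn t (le_trans hx ht.1)
      rw [Real.norm_eq_abs, abs_of_nonneg h1]
      exact hDub t (le_trans hx ht.1)
  -- FTC
  have hFTC : ∀ x b, x₁ ≤ x → x ≤ b → g x - g b = ∫ t in x..b, D t := by
    intro x b hx hxb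
    have := intervalIntegral.integral_eq_sub_of_hasDerivAt
      (f := fun y => -(E y) / Φ' y) (f' := D)
      (fun t ht => hderiv t (le_trans hx (by
        rcases ht with ⟨h1, h2⟩
        simpa [min_eq_left hxb] using h1)))
      (hID x b hx hxb)
    have h2 : (∫ t in x..b, D t) = -(E b) / Φ' b - (-(E x) / Φ' x) := this
    have hx' : -(E x) / Φ' x = -(g x) := by simp only [hg]; ring
    have hb' : -(E b) / Φ' b = -(g b) := by simp only [hg]; ring
    rw [hx', hb'] at h2
    linarith [h2]
  -- two-sided integral bounds
  have hlow : ∀ x b, x₁ ≤ x → x ≤ b → ε * ∫ t in x..b, E t ≤ g x - g b := by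
    intro x b hx hxb
    rw [hFTC x b hx hxb, ← intervalIntegral.integral_const_mul]
    exact intervalIntegral.integral_mono_on hxb ((hIE x b hx (le_trans hx hxb)).const_mul ε)
      (hID x b hx hxb) (fun t ht => hDlb t (le_trans hx ht.1))
  have hup : ∀ x b, x₁ ≤ x → x ≤ b → g x - g b ≤ (2 - ε) * ∫ t in x..b, E t := by
    intro x b hx hxb
    rw [hFTC x b hx hxb, ← intervalIntegral.integral_const_mul]
    exact intervalIntegral.integral_mono_on hxb (hID x b hx hxb)
      ((hIE x b hx (le_trans hx hxb)).const_mul _)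
      (fun t ht => hDub t (le_trans hx ht.1))
  have hganti : ∀ x b, x₁ ≤ x → x ≤ b → g b ≤ g x := by
    intro x b hx hxb
    have h1 := hlow x b hx hxb
    have h2 : 0 ≤ ∫ t in x..b, E t :=
      intervalIntegral.integral_nonneg hxb (fun t _ => (hEpos t).le)
    nlinarith
  -- tendsto of interval integral
  have htint : ∀ x ≥ x₁, Tendsto (fun b => ∫ t in x..b, E t) atTop
      (𝓝 (∫ t in Ici x, E t)) := by
    intro x hx
    rw [MeasureTheory.integral_Ici_eq_integral_Ioi]
    exact intervalIntegral_tendsto_integral_Ioi x ((hInt x hx).mono_set Ioi_subset_Ici_self)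
      tendsto_id
  -- g tends to 0
  have hgto0 : Tendsto g atTop (𝓝 0) := by
    set G : ℝ → ℝ := fun b => g (max b x₁) with hG
    have hGanti : Antitone G := by
      intro a b hab
      exact hganti (max a x₁) (max b x₁) (le_max_right _ _) (max_le_max hab le_rfl)
    have hbdd : BddBelow (range G) := ⟨0, by
      rintro y ⟨b, rfl⟩; exact (hgpos _ (le_max_right _ _)).le⟩
    have hGt : Tendsto G atTop (𝓝 (⨅ b, G b)) := tendsto_atTop_ciInf hGanti hbdd
    have hL0 : 0 ≤ ⨅ b, G b := le_ciInf fun b => (hgpos _ (le_max_right _ _)).le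
    have hLle : ∀ t ≥ x₁, ⨅ b, G b ≤ g t := by
      intro t ht
      have := ciInf_le hbdd t
      simp only [hG] at this
      rwa [max_eq_left ht] at this
    have hLeq : ⨅ b, G b = 0 := by
      by_contra hne
      have hL : 0 < ⨅ b, G b := lt_of_le_of_ne hL0 (Ne.symm hne)
      set L := ⨅ b, G b
      set T := ∫ t in Ici x₁, E t with hTdef
      have hElb : ∀ t ≥ x₁, L * Φ' t ≤ E t := by
        intro t ht
        have h1 := hLle t ht
        have h2 := hΦ'pos t ht
        rw [hg] at h1
        rw [le_div_iff₀ h2] at h1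
        linarith
      have hIub : ∀ b ≥ x₁, ∫ t in x₁..b, E t ≤ T := by
        intro b hb
        rw [intervalIntegral.integral_of_le hb]
        refine setIntegral_mono_set (hInt x₁ le_rfl) (ae_of_all _ fun t => (hEpos t).le) ?_
        exact ae_of_all _ (fun t ht => le_trans (le_of_lt ht.1) le_rfl)
      have hΦub : ∀ b ≥ x₁, Φ b ≤ Φ x₁ + T / L := by
        intro b hb
        have hftcΦ : Φ b - Φ x₁ = ∫ t in x₁..b, Φ' t := by
          symm
          exact intervalIntegral.integral_eq_sub_of_hasDerivAt
            (fun t ht => hd1 t (by rcases ht with ⟨h1, _⟩; simpa [min_eq_left hb] using h1))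
            ((hcontΦ'.mono (fun t ht => le_trans (le_min le_rfl hb) ht.1)).intervalIntegrable)
        have h1 : L * ∫ t in x₁..b, Φ' t ≤ ∫ t in x₁..b, E t := by
          rw [← intervalIntegral.integral_const_mul]
          exact intervalIntegral.integral_mono_on hb
            (((hcontΦ'.mono (fun t ht => le_trans (le_min le_rfl hb) ht.1)).intervalIntegrable).const_mul L)
            (hIE x₁ b le_rfl hb) (fun t ht => hElb t ht.1)
        have h2 := hIub b hb
        rw [← hftcΦ] at h1
        have h6 : Φ b - Φ x₁ ≤ T / L := by
          rw [le_div_iff₀ hL]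
          nlinarith
        linarith
      set c : ℝ := Real.exp (-(Φ x₁ + T / L)) with hc
      have hcpos : 0 < c := Real.exp_pos _
      have hEc : ∀ b ≥ x₁, c ≤ E b := by
        intro b hb
        exact Real.exp_le_exp.mpr (by linarith [hΦub b hb])
      have hTnn : 0 ≤ T := setIntegral_nonneg measurableSet_Ici fun t _ => (hEpos t).le
      obtain ⟨b, hbge, h4⟩ : ∃ b, x₁ ≤ b ∧ c * (b - x₁) = T + 1 := by
        refine ⟨x₁ + (T + 1) / c, ?_, ?_⟩
        · have : 0 ≤ (T + 1) / c := by positivity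
          linarith
        · rw [add_sub_cancel_left]
          exact mul_div_cancel₀ _ hcpos.ne'
      have h3 : c * (b - x₁) ≤ ∫ t in x₁..b, E t := by
        have := intervalIntegral.integral_mono_on hbge
          (intervalIntegrable_const (c := c)) (hIE x₁ b le_rfl hbge)
          (fun t ht => hEc t ht.1)
        simpa [mul_comm] using this
      have := hIub b hbge
      linarith
    rw [hLeq] at hGt
    refine hGt.congr' ?_
    filter_upwards [eventually_ge_atTop x₁] with b hb
    simp only [hG]
    rw [max_eq_left hb]
  -- main conclusion
  intro x hx
  have hTnn : 0 ≤ ∫ t in Ici x, E t :=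
    setIntegral_nonneg measurableSet_Ici fun t _ => (hEpos t).le
  have hTx := hT x hx
  have hkey1 : ε * ∫ t in Ici x, E t ≤ g x := by
    refine le_of_tendsto (((htint x hx).const_mul ε)) ?_
    filter_upwards [eventually_ge_atTop x] with b hb
    have h1 := hlow x b hx hb
    have h2 := (hgpos b (le_trans hx hb)).le
    linarith
  have hkey2 : g x ≤ (2 - ε) * ∫ t in Ici x, E t := by
    have htend : Tendsto (fun b => g b + (2 - ε) * ∫ t in x..b, E t) atTop
        (𝓝 (0 + (2 - ε) * ∫ t in Ici x, E t)) :=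
      hgto0.add ((htint x hx).const_mul _)
    rw [zero_add] at htend
    refine ge_of_tendsto htend ?_
    filter_upwards [eventually_ge_atTop x] with b hb
    have := hup x b hx hb
    linarith
  have hΦx := hΦ'pos x hx
  have hgx : g x = E x / Φ' x := by simp only [hg]
  refine ⟨hderiv x hx, hDlb x hx, hDub x hx, ?_, ?_⟩
  · rw [hTx, le_div_iff₀ (by positivity : (0:ℝ) < ε * Φ' x)]
    have h5 : E x / Φ' x * Φ' x = E x := div_mul_cancel₀ _ hΦx.ne'
    have h6 := mul_le_mul_of_nonneg_right hkey1 hΦx.le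
    rw [hgx] at h6
    nlinarith
  · rw [hTx]
    have h2 : E x / (ε * Φ' x) = g x / ε := by
      rw [hgx, div_div, mul_comm]
    rw [h2, div_le_iff₀ hε0]
    calc g x ≤ (2 - ε) * ∫ t in Ici x, E t := hkey2
    _ = (2 - ε) / ε * (∫ t in Ici x, E t) * ε := by
        field_simp
end

section
/- Let p ∈ (0,1), and write Φ_p(x)=|x|^p. The function Φ_{p,α}(x) = |x|^p (log(γ + |x|))^α with α > 0 and γ = e^{2α/(1−p)} satisfies: (i) it is increasing on ℝ⁺ with value 0 at 0; (ii) Φ_{p,α}(2x) ≥ 2^p Φ_{p,α}(x) for x large; (iii) |x Φ_{p,α}''(x)| ≤ Φ_{p,α}'(x) for x large. -/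
/-!
Since `γ ≥ 1`, `x ↦ log (γ + x)` is nonnegative and increasing on `[0, ∞)`, which gives
(i) and (ii) directly. For (iii), write `L = log (γ + x)` and `t = x / (γ + x) ∈ (0, 1)`
for `x > 0`. Then
  `Φ' x = x^(p-1) L^(α-2) (p L² + α t L)`,
  `x Φ'' x = x^(p-1) L^(α-2) (p (p-1) L² + 2 p α t L + α (α-1) t² - α t² L)`,
so (iii) reduces to a polynomial inequality in `t` and `L`, which holds once
`L ≥ 1`, `α ≤ p² L` and `2 p α + α² ≤ p (2 - p) L`, i.e. for all large `x`.
-/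

open Set Real

noncomputable section

/-- The perturbed power potential `|x|^p (log(γ+|x|))^α`. -/
def PhiPA (p α γ : ℝ) (x : ℝ) : ℝ := |x| ^ p * (Real.log (γ + |x|)) ^ α

open Filter Topology

theorem hasDerivAt_log_const_add_rpow (γ β : ℝ) {x : ℝ} (hx : 1 < γ + x) :
    HasDerivAt (fun y => log (γ + y) ^ β) (β * log (γ + x) ^ (β - 1) / (γ + x)) x := by
  have hlog := ((hasDerivAt_id' x).const_add γ).log (by linarith)
  convert hlog.rpow_const (p := β) (Or.inl (log_pos hx).ne') using 1
  ring

theorem abs_second_factor_le {p α t L : ℝ} (hp : 0 ≤ p) (hα : 0 ≤ α) (ht₀ : 0 ≤ t) (ht₁ : t ≤ 1)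
    (hL : 1 ≤ L) (h₁ : α ≤ p ^ 2 * L) (h₂ : 2 * p * α + α ^ 2 ≤ p * (2 - p) * L) :
    |p * (p - 1) * L ^ 2 + 2 * p * α * t * L + α * (α - 1) * t ^ 2 - α * t ^ 2 * L|
      ≤ p * L ^ 2 + α * t * L := by
  have hL₀ : 0 ≤ L := by linarith
  have ht₂ : t ^ 2 ≤ 1 := by nlinarith
  rw [abs_le]
  constructor
  · nlinarith [mul_le_mul_of_nonneg_left ht₂ hα,
      mul_le_mul_of_nonneg_left hL (mul_nonneg (sq_nonneg p) hL₀),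
      sq_nonneg (α * t), mul_nonneg (mul_nonneg (mul_nonneg hp hα) ht₀) hL₀,
      mul_nonneg (mul_nonneg (mul_nonneg hα ht₀) hL₀) (sub_nonneg.2 ht₁)]
  · nlinarith [mul_nonneg (mul_nonneg hp hα) (mul_nonneg (sub_nonneg.2 ht₁) hL₀),
      mul_nonneg (sq_nonneg α) (sub_nonneg.2 (ht₂.trans hL)),
      mul_nonneg (mul_nonneg hα ht₀) hL₀,
      mul_nonneg hα (sq_nonneg t), mul_nonneg (mul_nonneg hα (sq_nonneg t)) hL₀]

section PhiPA

variable {p α γ : ℝ}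

theorem phiPA_of_nonneg {x : ℝ} (hx : 0 ≤ x) : PhiPA p α γ x = x ^ p * log (γ + x) ^ α := by
  rw [PhiPA, abs_of_nonneg hx]

theorem phiPA_zero (hp : p ≠ 0) : PhiPA p α γ 0 = 0 := by
  simp [PhiPA, zero_rpow hp]

theorem strictMonoOn_phiPA (hp : 0 < p) (hα : 0 ≤ α) (hγ : 1 ≤ γ) :
    StrictMonoOn (PhiPA p α γ) (Ici 0) := by
  intro x (hx : 0 ≤ x) y (hy : 0 ≤ y) hxy
  rw [phiPA_of_nonneg hx, phiPA_of_nonneg hy]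
  have hlogx : 0 ≤ log (γ + x) := log_nonneg (by linarith)
  have hlogy : 0 < log (γ + y) := log_pos (by linarith)
  calc x ^ p * log (γ + x) ^ α
      ≤ x ^ p * log (γ + y) ^ α := by gcongr
    _ < y ^ p * log (γ + y) ^ α := by gcongr

theorem two_rpow_mul_phiPA_le (hα : 0 ≤ α) (hγ : 1 ≤ γ) (x : ℝ) :
    2 ^ p * PhiPA p α γ x ≤ PhiPA p α γ (2 * x) := by
  have hlog : 0 ≤ log (γ + |x|) := log_nonneg (by linarith [abs_nonneg x])
  rw [PhiPA, PhiPA, abs_mul, abs_two, mul_rpow zero_le_two (abs_nonneg x), mul_assoc]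
  gcongr
  linarith [abs_nonneg x]

theorem hasDerivAt_phiPA (hγ : 1 ≤ γ) {x : ℝ} (hx : 0 < x) :
    HasDerivAt (PhiPA p α γ)
      (p * x ^ (p - 1) * log (γ + x) ^ α + α * x ^ p * log (γ + x) ^ (α - 1) / (γ + x)) x := by
  have hmul : HasDerivAt (fun y => y ^ p * log (γ + y) ^ α) _ x :=
    (hasDerivAt_rpow_const (Or.inl hx.ne')).mul
      (hasDerivAt_log_const_add_rpow γ α (by linarith))
  refine (hmul.congr_of_eventuallyEq ?_).congr_deriv (by ring)
  filter_upwards [Ioi_mem_nhds hx] with y hy using phiPA_of_nonneg hy.le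

theorem deriv_phiPA (hγ : 1 ≤ γ) {x : ℝ} (hx : 0 < x) :
    deriv (PhiPA p α γ) x = x ^ (p - 1) * log (γ + x) ^ (α - 2) *
      (p * log (γ + x) ^ 2 + α * (x / (γ + x)) * log (γ + x)) := by
  have hlog : 0 < log (γ + x) := log_pos (by linarith)
  rw [(hasDerivAt_phiPA hγ hx).deriv]
  simp only [rpow_sub_one hx.ne', rpow_sub_one hlog.ne', rpow_sub hlog, rpow_two]
  field_simp

theorem mul_deriv_deriv_phiPA (hγ : 1 ≤ γ) {x : ℝ} (hx : 0 < x) :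
    x * deriv (deriv (PhiPA p α γ)) x = x ^ (p - 1) * log (γ + x) ^ (α - 2) *
      (p * (p - 1) * log (γ + x) ^ 2 + 2 * p * α * (x / (γ + x)) * log (γ + x)
        + α * (α - 1) * (x / (γ + x)) ^ 2 - α * (x / (γ + x)) ^ 2 * log (γ + x)) := by
  have hs : 1 < γ + x := by linarith
  have hlog : 0 < log (γ + x) := log_pos hs
  have hderiv : deriv (PhiPA p α γ) =ᶠ[𝓝 x] fun y =>
      p * y ^ (p - 1) * log (γ + y) ^ α + α * y ^ p * log (γ + y) ^ (α - 1) / (γ + y) := by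
    filter_upwards [Ioi_mem_nhds hx] with y hy using (hasDerivAt_phiPA hγ hy).deriv
  have h : HasDerivAt (fun y =>
      p * y ^ (p - 1) * log (γ + y) ^ α + α * y ^ p * log (γ + y) ^ (α - 1) / (γ + y)) _ x :=
    (((hasDerivAt_rpow_const (Or.inl hx.ne')).const_mul p).mul
      (hasDerivAt_log_const_add_rpow γ α hs)).add
    ((((hasDerivAt_rpow_const (Or.inl hx.ne')).const_mul α).mul
      (hasDerivAt_log_const_add_rpow γ (α - 1) hs)).div
      ((hasDerivAt_id' x).const_add γ) (by positivity))
  rw [hderiv.deriv_eq, h.deriv]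
  simp only [rpow_sub_one hx.ne', rpow_sub_one hlog.ne', rpow_sub hlog, rpow_two, Pi.mul_apply]
  field_simp
  ring

theorem eventually_abs_mul_deriv_deriv_phiPA_le (hp₀ : 0 < p) (hp₂ : p < 2) (hα : 0 ≤ α)
    (hγ : 1 ≤ γ) :
    ∀ᶠ x in atTop, |x * deriv (deriv (PhiPA p α γ)) x| ≤ deriv (PhiPA p α γ) x := by
  have hlog : Tendsto (fun x => log (γ + x)) atTop atTop :=
    tendsto_log_atTop.comp (tendsto_atTop_add_const_left _ γ tendsto_id)
  filter_upwards [eventually_gt_atTop 0, hlog.eventually_ge_atTop 1,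
    hlog.eventually_ge_atTop (α / p ^ 2),
    hlog.eventually_ge_atTop ((2 * p * α + α ^ 2) / (p * (2 - p)))] with x hx hL h₁ h₂
  have hs : 0 < γ + x := by linarith
  rw [mul_deriv_deriv_phiPA hγ hx, deriv_phiPA hγ hx, abs_mul,
    abs_of_pos (by positivity : 0 < x ^ (p - 1) * log (γ + x) ^ (α - 2))]
  gcongr
  rw [div_le_iff₀ (by positivity)] at h₁
  rw [div_le_iff₀ (by nlinarith)] at h₂
  exact abs_second_factor_le hp₀.le hα (by positivity) (div_le_one_of_le₀ (by linarith) hs.le)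
    hL (by linarith) (by linarith)

end PhiPA

theorem perturbed_power_satisfies_H (p α : ℝ) (hp : p ∈ Set.Ioo (0:ℝ) 1)
    (hα : 0 < α) (γ : ℝ) (hγ : γ = Real.exp (2 * α / (1 - p))) :
    (StrictMonoOn (PhiPA p α γ) (Set.Ici 0) ∧ PhiPA p α γ 0 = 0) ∧
    (∃ x₀ : ℝ, ∀ x ≥ x₀, (2:ℝ) ^ p * PhiPA p α γ x ≤ PhiPA p α γ (2 * x)) ∧
    (∃ x₁ : ℝ, ∀ x ≥ x₁,
      |x * deriv (deriv (PhiPA p α γ)) x| ≤ deriv (PhiPA p α γ) x) := by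
  obtain ⟨hp₀, hp₁⟩ := hp
  have hγ₁ : 1 ≤ γ := hγ ▸ one_le_exp (div_nonneg (by linarith) (by linarith))
  exact ⟨⟨strictMonoOn_phiPA hp₀ hα.le hγ₁, phiPA_zero hp₀.ne'⟩,
    ⟨0, fun x _ => two_rpow_mul_phiPA_le hα.le hγ₁ x⟩,
    eventually_atTop.1 (eventually_abs_mul_deriv_deriv_phiPA_le hp₀ (by linarith) hα.le hγ₁)⟩
end
end
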